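/- arXiv:1009.1381 — 3 statements merged into one kernel-verified Lean document; each statement's English description precedes it below -/
import Mathlib

section
/- In the graph G_l (l ≥ 3), the largest clique has size exactly 3, and every triangle of G_l is of the form {u_{i−1}, v_{i−1}, u_i} or {v_{i−1}, u_i, v_i} for some 2 ≤ i ≤ l. -/
/-!
Edges of `G_l` only join vertices whose indices differ by at most one, and each index carries
just two vertices, so a clique with at least three vertices contains two vertices with
consecutive indices `j, j + 1` and lies in the window `{u_j, v_j, u_{j+1}, v_{j+1}}`. The only
non-edge of that window is `u_j v_{j+1}`, so the clique lies in one of the two triangles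
`{u_j, v_j, u_{j+1}}` and `{v_j, u_{j+1}, v_{j+1}}`.
-/

/-- The relation defining the lower-bound graph `G_l`: vertex `(i, false)`
plays the role of `u_{i+1}` and `(i, true)` of `v_{i+1}` (0-indexed). -/
def GlRel (l : ℕ) (a b : Fin l × Bool) : Prop :=
  (a.1 = b.1 ∧ a.2 ≠ b.2) ∨
    ((a.1 : ℕ) + 1 = (b.1 : ℕ) ∧ (a.2 = b.2 ∨ (a.2 = true ∧ b.2 = false)))

def Gl (l : ℕ) : SimpleGraph (Fin l × Bool) := SimpleGraph.fromRel (GlRel l)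

lemma Set.ncard_le_three_of_subset {α : Type*} {s : Set α} {a b c : α} (h : s ⊆ {a, b, c}) :
    s.ncard ≤ 3 :=
  calc s.ncard ≤ ({a, b, c} : Set α).ncard := Set.ncard_le_ncard h
    _ ≤ ({b, c} : Set α).ncard + 1 := Set.ncard_insert_le _ _
    _ ≤ 3 := by grw [Set.ncard_insert_le, Set.ncard_singleton]

namespace Gl

variable {l : ℕ}

lemma adj_iff {a b : Fin l × Bool} :
    (Gl l).Adj a b ↔ a ≠ b ∧ (GlRel l a b ∨ GlRel l b a) := SimpleGraph.fromRel_adj ..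

lemma fst_eq_or_succ_of_adj {a b : Fin l × Bool} (h : (Gl l).Adj a b) :
    a.1 = b.1 ∨ (a.1 : ℕ) + 1 = b.1 ∨ (b.1 : ℕ) + 1 = a.1 := by
  rw [adj_iff, GlRel, GlRel] at h
  omega

lemma snd_ne_of_adj_of_fst_eq {a b : Fin l × Bool} (h : (Gl l).Adj a b)
    (hab : a.1 = b.1) : a.2 ≠ b.2 :=
  fun h2 => h.ne (Prod.ext hab h2)

lemma not_adj_false_true {i j : Fin l} (hij : (j : ℕ) + 1 = i) :
    ¬ (Gl l).Adj (j, false) (i, true) := by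
  simp only [adj_iff, GlRel, ne_eq, Prod.mk.injEq, Fin.ext_iff, Bool.false_eq_true,
    Bool.true_eq_false, and_false, and_true, or_false, or_true]
  omega

lemma exists_fst_succ_of_isClique {C : Set (Fin l × Bool)} (hC : (Gl l).IsClique C)
    (h3 : 3 ≤ C.ncard) : ∃ p ∈ C, ∃ q ∈ C, (p.1 : ℕ) + 1 = q.1 := by
  obtain ⟨a, b, c, ha, hb, hc, hab, hac, hbc⟩ := (Set.two_lt_ncard_iff).1 h3
  rcases fst_eq_or_succ_of_adj (hC ha hb hab) with hab' | hab' | hab'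
  · rcases fst_eq_or_succ_of_adj (hC ha hc hac) with hac' | hac' | hac'
    · have no_three_bools : ∀ x y z : Bool, x ≠ y → x ≠ z → y ≠ z → False := by
        decide
      exact (no_three_bools _ _ _ (snd_ne_of_adj_of_fst_eq (hC ha hb hab) hab')
        (snd_ne_of_adj_of_fst_eq (hC ha hc hac) hac')
        (snd_ne_of_adj_of_fst_eq (hC hb hc hbc) (hab'.symm.trans hac'))).elim
    · exact ⟨a, ha, c, hc, hac'⟩
    · exact ⟨c, hc, a, ha, hac'⟩
  · exact ⟨a, ha, b, hb, hab'⟩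
  · exact ⟨b, hb, a, ha, hab'⟩

lemma fst_eq_or_fst_eq_of_isClique {C : Set (Fin l × Bool)} (hC : (Gl l).IsClique C)
    {p q r : Fin l × Bool} (hp : p ∈ C) (hq : q ∈ C) (hr : r ∈ C)
    (hpq : (p.1 : ℕ) + 1 = q.1) : r.1 = p.1 ∨ r.1 = q.1 := by
  rcases eq_or_ne r p with rfl | hrp
  · exact Or.inl rfl
  rcases eq_or_ne r q with rfl | hrq
  · exact Or.inr rfl
  have := fst_eq_or_succ_of_adj (hC hr hp hrp)
  have := fst_eq_or_succ_of_adj (hC hr hq hrq)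
  simp only [Fin.ext_iff] at *
  omega

lemma subset_triangle_of_isClique {C : Set (Fin l × Bool)} (hC : (Gl l).IsClique C)
    {p q : Fin l × Bool} (hp : p ∈ C) (hq : q ∈ C) (hpq : (p.1 : ℕ) + 1 = q.1) :
    C ⊆ {(p.1, false), (p.1, true), (q.1, false)} ∨
      C ⊆ {(p.1, true), (q.1, false), (q.1, true)} := by
  have hwin : ∀ r ∈ C, r.1 = p.1 ∨ r.1 = q.1 := fun r hr =>
    fst_eq_or_fst_eq_of_isClique hC hp hq hr hpq
  by_cases hv : (q.1, true) ∈ C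
  · have hu : (p.1, false) ∉ C := fun hu =>
      not_adj_false_true hpq (hC hu hv (by simp))
    right
    rintro ⟨i, x⟩ hr
    rcases hwin _ hr with rfl | rfl <;> cases x <;> simp_all
  · left
    rintro ⟨i, x⟩ hr
    rcases hwin _ hr with rfl | rfl <;> cases x <;> simp_all

lemma isClique_lower_triangle {i j : Fin l} (hij : (j : ℕ) + 1 = i) :
    (Gl l).IsClique {(j, false), (j, true), (i, false)} := by
  intro a ha b hb hab
  simp only [Set.mem_insert_iff, Set.mem_singleton_iff] at ha hb
  rcases ha with rfl | rfl | rfl <;> rcases hb with rfl | rfl | rfl <;>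
    simp_all [adj_iff, GlRel, Fin.ext_iff]

lemma ncard_lower_triangle {i j : Fin l} (hij : (j : ℕ) + 1 = i) :
    ({(j, false), (j, true), (i, false)} : Set (Fin l × Bool)).ncard = 3 :=
  have hji : (j, false) ≠ (i, false) := by
    simp only [ne_eq, Prod.mk.injEq, Fin.ext_iff, and_true]
    omega
  Set.ncard_eq_three.2 ⟨_, _, _, by simp, hji, by simp, rfl⟩

end Gl

open Gl in
theorem Gl_cliques (l : ℕ) (hl : 3 ≤ l) :
    (∀ C : Set (Fin l × Bool), (Gl l).IsClique C → C.ncard ≤ 3) ∧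
    (∃ C : Set (Fin l × Bool), (Gl l).IsClique C ∧ C.ncard = 3) ∧
    (∀ C : Set (Fin l × Bool), (Gl l).IsClique C → C.ncard = 3 →
      ∃ i j : Fin l, (j : ℕ) + 1 = (i : ℕ) ∧
        (C = {(j, false), (j, true), (i, false)} ∨
          C = {(j, true), (i, false), (i, true)})) := by
  refine ⟨fun C hC => ?_, ?_, fun C hC h3 => ?_⟩
  · by_contra! h4
    obtain ⟨p, hp, q, hq, hpq⟩ := exists_fst_succ_of_isClique hC h4.le
    have := (subset_triangle_of_isClique hC hp hq hpq).elim
      Set.ncard_le_three_of_subset Set.ncard_le_three_of_subset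
    omega
  · have h01 : ((⟨0, by omega⟩ : Fin l) : ℕ) + 1 = (⟨1, by omega⟩ : Fin l) := rfl
    exact ⟨_, isClique_lower_triangle h01, ncard_lower_triangle h01⟩
  · obtain ⟨p, hp, q, hq, hpq⟩ := exists_fst_succ_of_isClique hC h3.ge
    refine ⟨q.1, p.1, hpq, ?_⟩
    have eq_of_subset {T : Set (Fin l × Bool)} (hT : C ⊆ T) (hT3 : T.ncard ≤ 3) : C = T :=
      Set.eq_of_subset_of_ncard_le hT (h3 ▸ hT3)
    exact (subset_triangle_of_isClique hC hp hq hpq).imp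
      (eq_of_subset · (Set.ncard_le_three_of_subset subset_rfl))
      (eq_of_subset · (Set.ncard_le_three_of_subset subset_rfl))
end

section
/- Let G = (V, E) be a graph on n vertices. Then the number of maximal independent sets of G is at most 3^{n/3}; consequently, the number of independent dominating sets of G is at most 3^{n/3}. -/
open Classical in
noncomputable def misF {V : Type*} [DecidableEq V] (G : SimpleGraph V) (W : Finset V) :
    Finset (Finset V) :=
  W.powerset.filter (fun S => (∀ a ∈ S, ∀ b ∈ S, ¬ G.Adj a b) ∧
    ∀ T ∈ W.powerset, S ⊆ T → (∀ a ∈ T, ∀ b ∈ T, ¬ G.Adj a b) → T = S)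

lemma mem_misF {V : Type*} [DecidableEq V] {G : SimpleGraph V} {W S : Finset V} :
    S ∈ misF G W ↔ S ⊆ W ∧ (∀ a ∈ S, ∀ b ∈ S, ¬ G.Adj a b) ∧
      ∀ T : Finset V, T ⊆ W → S ⊆ T → (∀ a ∈ T, ∀ b ∈ T, ¬ G.Adj a b) → T = S := by
  simp [misF, and_assoc]

lemma cube_le : ∀ k : ℕ, k ^ 3 ≤ 3 ^ k := by
  intro k
  induction k with
  | zero => norm_num
  | succ n ih =>
    rcases Nat.lt_or_ge n 3 with h | h
    · interval_cases n <;> norm_num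
    · have h2 : 3*n ≤ n*n := Nat.mul_le_mul_right n h
      have h3 : 3*(n*n) ≤ n*(n*n) := Nat.mul_le_mul_right (n*n) h
      calc (n+1)^3 ≤ 3 * n^3 := by nlinarith
      _ ≤ 3 * 3 ^ n := by omega
      _ = 3 ^ (n+1) := by ring

lemma nat_le_rpow (k : ℕ) : (k : ℝ) ≤ (3 : ℝ) ^ ((k : ℝ) / 3) := by
  have h0 : (0:ℝ) ≤ (3:ℝ) ^ ((k:ℝ)/3) := Real.rpow_nonneg (by norm_num) _
  rw [← pow_le_pow_iff_left₀ (Nat.cast_nonneg k) h0 (by norm_num : 3 ≠ 0)]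
  rw [← Real.rpow_natCast ((3:ℝ) ^ ((k:ℝ)/3)) 3, ← Real.rpow_mul (by norm_num)]
  have : (k:ℝ)/3 * (3:ℕ) = (k:ℕ) := by push_cast; ring
  rw [this, Real.rpow_natCast]
  exact_mod_cast cube_le k


lemma insert_indep {V : Type*} [DecidableEq V] {G : SimpleGraph V} {S : Finset V} {v : V}
    (hS : ∀ a ∈ S, ∀ b ∈ S, ¬ G.Adj a b) (hv : ∀ s ∈ S, ¬ G.Adj v s) :
    ∀ a ∈ insert v S, ∀ b ∈ insert v S, ¬ G.Adj a b := by
  intro a ha b hb hadj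
  rcases Finset.mem_insert.mp ha with h1 | h1 <;> rcases Finset.mem_insert.mp hb with h2 | h2
  · subst h1; subst h2; exact G.irrefl hadj
  · subst h1; exact hv b h2 hadj
  · subst h2; exact hv a h1 hadj.symm
  · exact hS a h1 b h2 hadj

lemma misF_card_le {V : Type*} [Fintype V] [DecidableEq V] (G : SimpleGraph V)
    [DecidableRel G.Adj] (W : Finset V) :
    ((misF G W).card : ℝ) ≤ (3 : ℝ) ^ ((W.card : ℝ) / 3) := by
  induction W using Finset.strongInduction with
  | _ W ih =>
  rcases Finset.eq_empty_or_nonempty W with hW | hW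
  · subst hW
    have hmis : misF G (∅ : Finset V) = {∅} := by
      ext S
      simp only [mem_misF, Finset.mem_singleton, Finset.subset_empty]
      constructor
      · rintro ⟨h, -, -⟩; exact h
      · rintro rfl
        refine ⟨rfl, by simp, fun T hT _ _ => by simpa using hT⟩
    simp [hmis]
  -- pick min-degree vertex
  obtain ⟨v, hv, hmin⟩ := Finset.exists_min_image W
    (fun u => (W ∩ G.neighborFinset u).card) hW
  set d := (W ∩ G.neighborFinset v).card with hd
  set Nv : Finset V := insert v (W ∩ G.neighborFinset v) with hNv
  have hNvW : Nv ⊆ W := by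
    intro x hx
    rcases Finset.mem_insert.mp hx with rfl | hx
    · exact hv
    · exact (Finset.mem_inter.mp hx).1
  have hvnot : v ∉ W ∩ G.neighborFinset v := by
    simp [G.irrefl]
  have hNvcard : Nv.card = d + 1 := by
    rw [hNv, Finset.card_insert_of_notMem hvnot]
  have hdW : d + 1 ≤ W.card := hNvcard ▸ Finset.card_le_card hNvW
  -- closed neighborhoods
  set C : V → Finset V := fun u => insert u (G.neighborFinset u) with hC
  have hCcard : ∀ u ∈ Nv, (W \ C u).card ≤ W.card - (d + 1) := by
    intro u hu
    have huW : u ∈ W := hNvW hu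
    have h1 : W ∩ C u = insert u (W ∩ G.neighborFinset u) := by
      rw [hC, Finset.inter_insert_of_mem huW]
    have h2 : d + 1 ≤ (W ∩ C u).card := by
      rw [h1, Finset.card_insert_of_notMem (by simp [G.irrefl])]
      exact Nat.add_le_add_right (hmin u huW) 1
    have h3 : (W \ C u).card + (W ∩ C u).card = W.card :=
      Finset.card_sdiff_add_card_inter W (C u)
    omega
  have hCu_ssub : ∀ u ∈ Nv, W \ C u ⊂ W := by
    intro u hu
    refine Finset.ssubset_iff_of_subset (Finset.sdiff_subset) |>.mpr ?_
    exact ⟨u, hNvW hu, by simp [hC]⟩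
  -- key covering
  have hcover : misF G W ⊆ Nv.biUnion (fun u => (misF G (W \ C u)).image (insert u)) := by
    intro S hS
    rw [mem_misF] at hS
    obtain ⟨hSW, hSind, hSmax⟩ := hS
    -- S meets Nv
    have hmeet : ∃ u ∈ Nv, u ∈ S := by
      by_contra hcon
      push_neg at hcon
      have hvS : v ∉ S := hcon v (Finset.mem_insert_self _ _)
      have hTind : ∀ a ∈ insert v S, ∀ b ∈ insert v S, ¬ G.Adj a b := by
        refine insert_indep hSind ?_
        intro s hs hadj
        exact hcon s (Finset.mem_insert_of_mem
          (Finset.mem_inter.mpr ⟨hSW hs, by simpa using hadj⟩)) hs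
      have := hSmax (insert v S) (Finset.insert_subset hv hSW)
        (Finset.subset_insert _ _) hTind
      exact hvS (this ▸ Finset.mem_insert_self v S)
    obtain ⟨u, huNv, huS⟩ := hmeet
    refine Finset.mem_biUnion.mpr ⟨u, huNv, Finset.mem_image.mpr ⟨S.erase u, ?_, Finset.insert_erase huS⟩⟩
    rw [mem_misF]
    refine ⟨?_, fun a ha b hb => hSind a (Finset.erase_subset _ _ ha) b (Finset.erase_subset _ _ hb), ?_⟩
    · intro x hx
      obtain ⟨hxu, hxS⟩ := Finset.mem_erase.mp hx
      refine Finset.mem_sdiff.mpr ⟨hSW hxS, ?_⟩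
      simp only [hC, Finset.mem_insert, SimpleGraph.mem_neighborFinset]
      push_neg
      exact ⟨hxu, fun h => hSind u huS x hxS h⟩
    · intro T hTW hsub hTind
      have huT : u ∉ T := by
        intro huT
        have := Finset.mem_sdiff.mp (hTW huT)
        exact this.2 (by simp [hC])
      have hTadj : ∀ t ∈ T, ¬ G.Adj u t := by
        intro t ht hadj
        have := Finset.mem_sdiff.mp (hTW ht)
        exact this.2 (by simp [hC, hadj])
      have hind' : ∀ a ∈ insert u T, ∀ b ∈ insert u T, ¬ G.Adj a b :=
        insert_indep hTind hTadj
      have hsub' : S ⊆ insert u T := by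
        intro x hx
        rcases eq_or_ne x u with rfl | hxu
        · exact Finset.mem_insert_self _ _
        · exact Finset.mem_insert_of_mem (hsub (Finset.mem_erase.mpr ⟨hxu, hx⟩))
      have hTW' : insert u T ⊆ W :=
        Finset.insert_subset (hNvW huNv) (hTW.trans Finset.sdiff_subset)
      have heq : insert u T = S := hSmax _ hTW' hsub' hind'
      apply Finset.Subset.antisymm
      · intro t ht
        exact Finset.mem_erase.mpr ⟨fun h => huT (h ▸ ht), heq ▸ Finset.mem_insert_of_mem ht⟩
      · exact hsub
  -- count
  have h3pos : (0:ℝ) < 3 := by norm_num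
  have hbound : ∀ u ∈ Nv, ((misF G (W \ C u)).card : ℝ) ≤
      (3:ℝ) ^ (((W.card - (d+1) : ℕ) : ℝ) / 3) := by
    intro u hu
    refine (ih _ (hCu_ssub u hu)).trans ?_
    apply Real.rpow_le_rpow_of_exponent_le (by norm_num)
    have := hCcard u hu
    have := hdW
    rw [div_le_div_iff_of_pos_right (by norm_num : (0:ℝ) < 3)]
    exact_mod_cast hCcard u hu
  calc ((misF G W).card : ℝ)
      ≤ ((Nv.biUnion (fun u => (misF G (W \ C u)).image (insert u))).card : ℝ) := by
        exact_mod_cast Finset.card_le_card hcover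
    _ ≤ ∑ u ∈ Nv, (((misF G (W \ C u)).image (insert u)).card : ℝ) := by
        exact_mod_cast Finset.card_biUnion_le
    _ ≤ ∑ u ∈ Nv, ((misF G (W \ C u)).card : ℝ) := by
        refine Finset.sum_le_sum fun u hu => ?_
        exact_mod_cast Finset.card_image_le
    _ ≤ ∑ u ∈ Nv, (3:ℝ) ^ (((W.card - (d+1) : ℕ) : ℝ) / 3) :=
        Finset.sum_le_sum hbound
    _ = ((d:ℝ) + 1) * (3:ℝ) ^ (((W.card - (d+1) : ℕ) : ℝ) / 3) := by
        rw [Finset.sum_const, hNvcard]; push_cast [nsmul_eq_mul]; ring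
    _ ≤ (3:ℝ) ^ (((d+1 : ℕ):ℝ) / 3) * (3:ℝ) ^ (((W.card - (d+1) : ℕ) : ℝ) / 3) := by
        apply mul_le_mul_of_nonneg_right _ (Real.rpow_nonneg (by norm_num) _)
        have := nat_le_rpow (d+1)
        push_cast at this ⊢
        exact this
    _ = (3:ℝ) ^ ((W.card : ℝ) / 3) := by
        rw [← Real.rpow_add h3pos]
        congr 1
        have : ((W.card - (d+1) : ℕ) : ℝ) = (W.card : ℝ) - ((d:ℝ)+1) := by
          push_cast [Nat.cast_sub hdW]; ring
        rw [this]; push_cast; ring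

def IsIndepSet {V : Type*} (G : SimpleGraph V) (S : Set V) : Prop :=
  ∀ ⦃a⦄, a ∈ S → ∀ ⦃b⦄, b ∈ S → ¬ G.Adj a b

def IsMaximalIndepSet {V : Type*} (G : SimpleGraph V) (S : Set V) : Prop :=
  IsIndepSet G S ∧ ∀ T : Set V, S ⊆ T → IsIndepSet G T → T = S

def IsIndepDomSet {V : Type*} (G : SimpleGraph V) (S : Set V) : Prop :=
  IsIndepSet G S ∧ ∀ v, v ∉ S → ∃ u ∈ S, G.Adj u v

lemma ids_iff_mis {V : Type*} (G : SimpleGraph V) (S : Set V) :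
    IsIndepDomSet G S ↔ IsMaximalIndepSet G S := by
  constructor
  · rintro ⟨hind, hdom⟩
    refine ⟨hind, fun T hST hTind => ?_⟩
    refine Set.Subset.antisymm (fun t ht => ?_) hST
    by_contra hts
    obtain ⟨u, huS, hadj⟩ := hdom t hts
    exact hTind (hST huS) ht hadj
  · rintro ⟨hind, hmax⟩
    refine ⟨hind, fun v hv => ?_⟩
    by_contra hcon
    push_neg at hcon
    have hins : IsIndepSet G (insert v S) := by
      intro a ha b hb hadj
      rcases Set.mem_insert_iff.mp ha with h1 | h1 <;>
        rcases Set.mem_insert_iff.mp hb with h2 | h2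
      · subst h1; subst h2; exact G.irrefl hadj
      · subst h1; exact hcon b h2 hadj.symm
      · subst h2; exact hcon a h1 hadj
      · exact hind h1 h2 hadj
    have := hmax _ (Set.subset_insert v S) hins
    exact hv (this ▸ Set.mem_insert v S)

/-- Moon–Moser bound: a graph on `n` vertices has at most `3^{n/3}` maximal
independent sets, hence at most `3^{n/3}` independent dominating sets. -/
theorem moon_moser_bound {V : Type*} [Fintype V] (G : SimpleGraph V) :
    (({S : Set V | IsMaximalIndepSet G S}.ncard : ℝ) ≤
        (3 : ℝ) ^ ((Fintype.card V : ℝ) / 3)) ∧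
      (({S : Set V | IsIndepDomSet G S}.ncard : ℝ) ≤
        (3 : ℝ) ^ ((Fintype.card V : ℝ) / 3)) := by
  classical
  have hEq : {S : Set V | IsIndepDomSet G S} = {S : Set V | IsMaximalIndepSet G S} := by
    ext S; exact ids_iff_mis G S
  have key : ({S : Set V | IsMaximalIndepSet G S}.ncard : ℝ) ≤
      (3 : ℝ) ^ ((Fintype.card V : ℝ) / 3) := by
    have hmem : ∀ S : Set V, IsMaximalIndepSet G S →
        (Set.toFinite S).toFinset ∈ misF G Finset.univ := by
      intro S hS
      obtain ⟨hind, hmax⟩ := hS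
      rw [mem_misF]
      refine ⟨Finset.subset_univ _, ?_, ?_⟩
      · intro a ha b hb
        rw [Set.Finite.mem_toFinset] at ha hb
        exact hind ha hb
      · intro T _ hsub hTind
        have hST : S ⊆ (T : Set V) := by
          intro x hx
          exact hsub ((Set.Finite.mem_toFinset _).mpr hx)
        have : (T : Set V) = S := hmax _ hST (fun a ha b hb => hTind a ha b hb)
        apply Finset.coe_injective
        rw [this, Set.Finite.coe_toFinset]
    have hinj : Set.InjOn (fun S : Set V => (Set.toFinite S).toFinset)
        {S | IsMaximalIndepSet G S} := by
      intro S _ T _ h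
      have h2 := congrArg (fun f : Finset V => (f : Set V)) h
      simpa [Set.Finite.coe_toFinset] using h2
    have himg : (fun S : Set V => (Set.toFinite S).toFinset) '' {S | IsMaximalIndepSet G S}
        ⊆ ↑(misF G Finset.univ) := by
      rintro _ ⟨S, hS, rfl⟩
      exact hmem S hS
    have hle : {S : Set V | IsMaximalIndepSet G S}.ncard ≤ (misF G Finset.univ).card := by
      calc {S : Set V | IsMaximalIndepSet G S}.ncard
          = ((fun S : Set V => (Set.toFinite S).toFinset) ''
              {S | IsMaximalIndepSet G S}).ncard := (Set.ncard_image_of_injOn hinj).symm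
        _ ≤ (↑(misF G Finset.univ) : Set (Finset V)).ncard :=
            Set.ncard_le_ncard himg (Set.toFinite _)
        _ = (misF G Finset.univ).card := Set.ncard_coe_finset _
    calc ({S : Set V | IsMaximalIndepSet G S}.ncard : ℝ)
        ≤ ((misF G Finset.univ).card : ℝ) := by exact_mod_cast hle
      _ ≤ (3 : ℝ) ^ (((Finset.univ : Finset V).card : ℝ) / 3) := misF_card_le G _
      _ = (3 : ℝ) ^ ((Fintype.card V : ℝ) / 3) := by rw [Finset.card_univ]
  exact ⟨key, by rw [hEq]; exact key⟩
end

section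
/- Let G = (F, M, E) be a marked graph whose free-vertex-induced graph G[F] is a disjoint union of cliques K₁, …, K_l, each of size at most 4, and suppose each marked vertex has at most 4 free neighbors. Construct the CSP instance with variables x₁, …, x_l, domain D(x_i) = {1, …, |K_i|} (identifying value j with the j-th vertex of K_i), and, for each marked vertex u, the constraint requiring that for at least one clique K_i containing a neighbor of u, the vertex selected from K_i is a neighbor of u. Then G has an independent dominating set if and only if this CSP instance is satisfiable, and satisfying assignments correspond bijectively to independent dominating sets of G. -/
/-- `D` is an independent dominating set of the marked graph with free
vertices `F` (marked vertices being the rest of the vertex set). -/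
def IsMarkedIDS {V : Type*} (G : SimpleGraph V) (F : Set V) (D : Set V) : Prop :=
  D ⊆ F ∧ (∀ ⦃a⦄, a ∈ D → ∀ ⦃b⦄, b ∈ D → ¬ G.Adj a b) ∧
    (∀ v, v ∉ D → ∃ u ∈ D, G.Adj u v)

/-- A satisfying assignment of the CSP instance: a choice of one vertex from
each clique such that every marked vertex sees the chosen vertex of at least
one clique. An assignment of value `j` to variable `x_i` is identified with
the choice of the `j`-th vertex of `K_i`, i.e. with `f i ∈ K i`. -/
def SatAssignment {V : Type*} (G : SimpleGraph V) (M : Set V) {l : ℕ}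
    (K : Fin l → Set V) (f : Fin l → V) : Prop :=
  (∀ i, f i ∈ K i) ∧ ∀ u ∈ M, ∃ i, G.Adj u (f i)

theorem csp_reduction {V : Type*} [Fintype V]
    (G : SimpleGraph V) (F M : Set V) (hFM : F ∪ M = Set.univ)
    (hdisj : Disjoint F M)
    (hMM : ∀ a ∈ M, ∀ b ∈ M, ¬ G.Adj a b)
    (l : ℕ) (K : Fin l → Set V)
    (hKF : ∀ i, K i ⊆ F)
    (hKne : ∀ i, (K i).Nonempty)
    (hKsize : ∀ i, (K i).ncard ≤ 4)
    (hKdisj : ∀ i j, i ≠ j → Disjoint (K i) (K j))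
    (hcover : (⋃ i, K i) = F)
    (hclique : ∀ i, (K i).Pairwise G.Adj)
    (hnoedge : ∀ i j, i ≠ j → ∀ a ∈ K i, ∀ b ∈ K j, ¬ G.Adj a b)
    (hMdeg : ∀ u ∈ M, ({w ∈ F | G.Adj u w}).ncard ≤ 4) :
    ((∃ D : Set V, IsMarkedIDS G F D) ↔ (∃ f, SatAssignment G M K f)) ∧
      (∀ f, SatAssignment G M K f → IsMarkedIDS G F (Set.range f)) ∧
      (∀ D : Set V, IsMarkedIDS G F D →
        ∃! f, SatAssignment G M K f ∧ Set.range f = D) := by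
  have hsat_ids : ∀ f, SatAssignment G M K f → IsMarkedIDS G F (Set.range f) := by
    rintro f ⟨hf1, hf2⟩
    refine ⟨?_, ?_, ?_⟩
    · rintro _ ⟨i, rfl⟩; exact hKF i (hf1 i)
    · rintro _ ⟨i, rfl⟩ _ ⟨j, rfl⟩ hadj
      rcases eq_or_ne i j with rfl | hij
      · exact G.irrefl hadj
      · exact hnoedge i j hij _ (hf1 i) _ (hf1 j) hadj
    · intro v hv
      have hv' : v ∈ F ∪ M := by rw [hFM]; trivial
      rcases hv' with hvF | hvM
      · obtain ⟨i, hi⟩ := Set.mem_iUnion.mp (by rw [hcover]; exact hvF)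
        exact ⟨f i, ⟨i, rfl⟩, hclique i (hf1 i) hi (fun h => hv ⟨i, h⟩)⟩
      · obtain ⟨i, hi⟩ := hf2 v hvM
        exact ⟨f i, ⟨i, rfl⟩, hi.symm⟩
  have key : ∀ D : Set V, IsMarkedIDS G F D → ∀ i, ∃ v, v ∈ D ∩ K i := by
    rintro D ⟨hDF, hind, hdom⟩ i
    obtain ⟨a, ha⟩ := hKne i
    by_cases haD : a ∈ D
    · exact ⟨a, haD, ha⟩
    · obtain ⟨u, huD, hua⟩ := hdom a haD
      obtain ⟨j, hj⟩ := Set.mem_iUnion.mp (by rw [hcover]; exact hDF huD)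
      rcases eq_or_ne j i with rfl | hji
      · exact ⟨u, huD, hj⟩
      · exact absurd hua (hnoedge j i hji u hj a ha)
  have uniq : ∀ D : Set V, IsMarkedIDS G F D →
      ∀ i, ∀ v ∈ D ∩ K i, ∀ w ∈ D ∩ K i, v = w := by
    rintro D ⟨hDF, hind, hdom⟩ i v ⟨hvD, hvK⟩ w ⟨hwD, hwK⟩
    by_contra hne
    exact hind hvD hwD (hclique i hvK hwK hne)
  have hids_sat : ∀ D, IsMarkedIDS G F D →
      ∃ f, SatAssignment G M K f ∧ Set.range f = D := by
    intro D hD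
    choose f hf using key D hD
    refine ⟨f, ⟨fun i => (hf i).2, ?_⟩, ?_⟩
    · intro u huM
      have huD : u ∉ D := fun h => Set.disjoint_left.mp hdisj (hD.1 h) huM
      obtain ⟨w, hwD, hwu⟩ := hD.2.2 u huD
      obtain ⟨i, hi⟩ := Set.mem_iUnion.mp (by rw [hcover]; exact hD.1 hwD)
      have hw : w = f i := uniq D hD i w ⟨hwD, hi⟩ (f i) (hf i)
      exact ⟨i, hw ▸ hwu.symm⟩
    · apply Set.eq_of_subset_of_subset
      · rintro _ ⟨i, rfl⟩; exact (hf i).1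
      · intro d hdD
        obtain ⟨i, hi⟩ := Set.mem_iUnion.mp (by rw [hcover]; exact hD.1 hdD)
        exact ⟨i, uniq D hD i (f i) (hf i) d ⟨hdD, hi⟩⟩
  refine ⟨⟨?_, ?_⟩, hsat_ids, ?_⟩
  · rintro ⟨D, hD⟩
    obtain ⟨f, hf, -⟩ := hids_sat D hD
    exact ⟨f, hf⟩
  · rintro ⟨f, hf⟩
    exact ⟨_, hsat_ids f hf⟩
  · intro D hD
    obtain ⟨f, hf, hrange⟩ := hids_sat D hD
    refine ⟨f, ⟨hf, hrange⟩, ?_⟩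
    rintro g ⟨hg, hgr⟩
    funext i
    exact uniq D hD i (g i) ⟨by rw [← hgr]; exact ⟨i, rfl⟩, hg.1 i⟩
      (f i) ⟨by rw [← hrange]; exact ⟨i, rfl⟩, hf.1 i⟩
end
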